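/- arXiv:2203.00486 — 2 statements merged into one kernel-verified Lean document; each statement's English description precedes it below -/
import Mathlib

section
/- Let a > 0, M > 0, and let U : ℝ → ℝ be continuous with 0 < U(x) ≤ M for all x ∈ ℝ. Let τ : [0,∞) → ℝ be twice continuously differentiable with τ(0) = 0, τ'(0) = 1/a², and τ''(t) = −8(τ'(t))² U(τ(t)) for all t ≥ 0. Then for every τᶠ > 0 there exists T ≥ 0 such that τ(T) = τᶠ. -/
/-!
With `V` the primitive of `U` vanishing at `0`, the quantity `τ' · exp (8 V(τ))` has zero
derivative along the solution, so `τ' = a⁻² exp (-8 V(τ))`. As `V` is nondecreasing, the speed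
stays above `a⁻² exp (-8 V(τᶠ)) > 0` as long as `τ ≤ τᶠ`; hence `τ` exceeds `τᶠ` in finite time
and attains it by the intermediate value theorem.
-/

open Set Real

theorem exists_eq_of_hasDerivWithinAt_Ici_of_pos_le_deriv {f f' : ℝ → ℝ} {t₀ c y : ℝ} (hc : 0 < c)
    (hf : ∀ t ∈ Ici t₀, HasDerivWithinAt f (f' t) (Ici t₀) t)
    (hf' : ∀ t ∈ Ici t₀, f t ≤ y → c ≤ f' t) (hy : f t₀ ≤ y) :
    ∃ T, t₀ ≤ T ∧ f T = y := by
  have hcont : ContinuousOn f (Ici t₀) := fun t ht => (hf t ht).continuousWithinAt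
  by_cases hreach : ∃ s, t₀ ≤ s ∧ y ≤ f s
  · obtain ⟨s, hs, hys⟩ := hreach
    obtain ⟨T, hT, hfT⟩ := intermediate_value_Icc hs (hcont.mono Icc_subset_Ici_self) ⟨hy, hys⟩
    exact ⟨T, hT.1, hfT⟩
  push Not at hreach
  have hmono : MonotoneOn (fun t => f t - c * t) (Ici t₀) := by
    refine monotoneOn_of_hasDerivWithinAt_nonneg (convex_Ici t₀)
      (hcont.sub (continuousOn_const.mul continuousOn_id)) (fun t ht => ?_) (fun t ht => ?_)
      (f' := fun t => f' t - c)
    · rw [interior_Ici, mem_Ioi] at ht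
      exact (((hf t ht.le).hasDerivAt (Ici_mem_nhds ht)).sub
        ((hasDerivAt_id t).const_mul c |>.congr_deriv (mul_one c))).hasDerivWithinAt
    · rw [interior_Ici, mem_Ioi] at ht
      exact sub_nonneg.2 (hf' t ht.le (hreach t ht.le).le)
  set T := t₀ + (y - f t₀ + 1) / c
  have hT : t₀ ≤ T := le_add_of_nonneg_right (div_nonneg (by linarith) hc.le)
  have hgain : c * (T - t₀) = y - f t₀ + 1 := by
    simp only [T, add_sub_cancel_left]
    field_simp
  linarith [hmono self_mem_Ici hT hT, hreach T hT]

theorem mul_exp_comp_eq_of_ode {U V τ τ' τ'' : ℝ → ℝ} {k t₀ : ℝ}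
    (hV : ∀ x, HasDerivAt V (U x) x)
    (hτ' : ∀ t ∈ Ici t₀, HasDerivWithinAt τ (τ' t) (Ici t₀) t)
    (hτ'' : ∀ t ∈ Ici t₀, HasDerivWithinAt τ' (τ'' t) (Ici t₀) t)
    (hode : ∀ t ∈ Ici t₀, τ'' t = -k * τ' t ^ 2 * U (τ t)) :
    ∀ t ∈ Ici t₀, τ' t * exp (k * V (τ t)) = τ' t₀ * exp (k * V (τ t₀)) := by
  have hderiv : ∀ t ∈ Ici t₀,
      HasDerivWithinAt (fun s => τ' s * exp (k * V (τ s))) 0 (Ici t₀) t := by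
    intro t ht
    have hexp := (((hV (τ t)).comp_hasDerivWithinAt t (hτ' t ht)).const_mul k).exp
    refine ((hτ'' t ht).mul hexp).congr_deriv ?_
    rw [hode t ht]
    ring
  intro t ht
  exact constant_of_has_deriv_right_zero (fun s hs => (hderiv s hs.1).continuousWithinAt.mono
    Icc_subset_Ici_self) (fun s hs => (hderiv s hs.1).mono (Ici_subset_Ici.2 hs.1)) t ⟨ht, le_rfl⟩

theorem stmt_4_general (a : ℝ) (ha : 0 < a)
    (U : ℝ → ℝ) (hUc : Continuous U) (hUpos : ∀ x, 0 < U x)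
    (τ τ' τ'' : ℝ → ℝ)
    (hτ' : ∀ t ∈ Set.Ici (0:ℝ), HasDerivWithinAt τ (τ' t) (Set.Ici 0) t)
    (hτ'' : ∀ t ∈ Set.Ici (0:ℝ), HasDerivWithinAt τ' (τ'' t) (Set.Ici 0) t)
    (h0 : τ 0 = 0) (h1 : τ' 0 = 1 / a ^ 2)
    (hode : ∀ t ∈ Set.Ici (0:ℝ), τ'' t = -8 * (τ' t) ^ 2 * U (τ t)) :
    ∀ τf : ℝ, 0 < τf → ∃ T : ℝ, 0 ≤ T ∧ τ T = τf := by
  intro τf hτf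
  set V : ℝ → ℝ := fun x => ∫ u in (0:ℝ)..x, U u
  have hV : ∀ x, HasDerivAt V (U x) x := fun x => (hUc.integral_hasStrictDerivAt 0 x).hasDerivAt
  have hVmono : Monotone V := monotone_of_hasDerivAt_nonneg hV fun x => (hUpos x).le
  have hfirst := mul_exp_comp_eq_of_ode hV hτ' hτ'' hode
  have hV0 : V 0 = 0 := intervalIntegral.integral_same
  simp only [h0, h1, hV0, mul_zero, exp_zero, mul_one] at hfirst
  refine exists_eq_of_hasDerivWithinAt_Ici_of_pos_le_deriv (c := 1 / a ^ 2 * exp (-(8 * V τf)))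
    (by positivity) hτ' (fun t ht hle => ?_) (h0.trans_le hτf.le)
  calc 1 / a ^ 2 * exp (-(8 * V τf))
      ≤ 1 / a ^ 2 * exp (-(8 * V (τ t))) := by gcongr; exact hVmono hle
    _ = τ' t := by rw [← hfirst t ht, exp_neg, mul_inv_cancel_right₀ (exp_pos _).ne']

/-- Finite-time attainment: a globally defined solution of `τ'' = −8(τ')²U(τ)` on `[0,∞)`
with `τ(0) = 0`, `τ'(0) = 1/a²` and `0 < U ≤ M` continuous reaches every prescribed
positive value `τᶠ` in finite time. -/
theorem stmt_4 (a M : ℝ) (ha : 0 < a) (hM : 0 < M)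
    (U : ℝ → ℝ) (hUc : Continuous U) (hUpos : ∀ x, 0 < U x) (hUle : ∀ x, U x ≤ M)
    (τ τ' τ'' : ℝ → ℝ)
    (hτ' : ∀ t ∈ Set.Ici (0:ℝ), HasDerivWithinAt τ (τ' t) (Set.Ici 0) t)
    (hτ'' : ∀ t ∈ Set.Ici (0:ℝ), HasDerivWithinAt τ' (τ'' t) (Set.Ici 0) t)
    (hτ''c : ContinuousOn τ'' (Set.Ici 0))
    (h0 : τ 0 = 0) (h1 : τ' 0 = 1 / a ^ 2)
    (hode : ∀ t ∈ Set.Ici (0:ℝ), τ'' t = -8 * (τ' t) ^ 2 * U (τ t)) :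
    ∀ τf : ℝ, 0 < τf → ∃ T : ℝ, 0 ≤ T ∧ τ T = τf :=
  stmt_4_general a ha U hUc hUpos τ τ' τ'' hτ' hτ'' h0 h1 hode
end

section
/- Let c > 0 with c ≠ 1. Then ∫₀^{π/2} log(c·cos²θ + c⁻¹·sin²θ) dθ > 0. -/
/-!
By concavity of `log`, `log (a cos²θ + b sin²θ) ≥ cos²θ log a + sin²θ log b`, strictly at `θ = π/4`
when `a ≠ b`; the right side integrates to `π/4 · (log a + log b)`, which vanishes for `b = a⁻¹`.
-/

open Real intervalIntegral

lemma mul_cos_sq_add_mul_sin_sq_pos {a b : ℝ} (ha : 0 < a) (hb : 0 < b) (θ : ℝ) :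
    0 < a * cos θ ^ 2 + b * sin θ ^ 2 := by
  rcases eq_or_ne (sin θ) 0 with hs | hs
  · have hc : cos θ ^ 2 = 1 := by nlinarith [sin_sq_add_cos_sq θ]
    simpa [hs, hc] using ha
  · have : 0 < sin θ ^ 2 := by positivity
    positivity

lemma cos_sq_mul_log_add_sin_sq_mul_log_le {a b : ℝ} (ha : 0 < a) (hb : 0 < b) (θ : ℝ) :
    cos θ ^ 2 * log a + sin θ ^ 2 * log b ≤ log (a * cos θ ^ 2 + b * sin θ ^ 2) := by
  rw [mul_comm a, mul_comm b]
  exact strictConcaveOn_log_Ioi.concaveOn.2 ha hb (sq_nonneg _) (sq_nonneg _) (cos_sq_add_sin_sq θ)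

lemma log_add_log_div_two_lt {a b : ℝ} (ha : 0 < a) (hb : 0 < b) (hab : a ≠ b) :
    (log a + log b) / 2 < log ((a + b) / 2) := by
  calc (log a + log b) / 2 = 1 / 2 * log a + 1 / 2 * log b := by ring
    _ < log (1 / 2 * a + 1 / 2 * b) :=
      strictConcaveOn_log_Ioi.2 ha hb hab (by norm_num) (by norm_num) (by norm_num)
    _ = log ((a + b) / 2) := by ring_nf

lemma integral_cos_sq_mul_log_add_sin_sq_mul_log (a b : ℝ) :
    ∫ θ in (0 : ℝ)..π / 2, (cos θ ^ 2 * log a + sin θ ^ 2 * log b) = π / 4 * (log a + log b) := by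
  have hcont : ∀ f : ℝ → ℝ, Continuous f → IntervalIntegrable f MeasureTheory.volume 0 (π / 2) :=
    fun f hf => hf.intervalIntegrable _ _
  rw [integral_add (hcont _ (by fun_prop)) (hcont _ (by fun_prop)), integral_mul_const,
    integral_mul_const, integral_cos_sq, integral_sin_sq]
  simp only [cos_pi_div_two, sin_zero, cos_zero, sin_pi_div_two]
  ring

theorem pi_div_four_mul_log_add_log_lt_integral_log {a b : ℝ} (ha : 0 < a) (hb : 0 < b)
    (hab : a ≠ b) :
    π / 4 * (log a + log b) < ∫ θ in (0 : ℝ)..π / 2, log (a * cos θ ^ 2 + b * sin θ ^ 2) := by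
  rw [← integral_cos_sq_mul_log_add_sin_sq_mul_log]
  refine integral_lt_integral_of_continuousOn_of_le_of_exists_lt (by positivity) (by fun_prop)
    ((by fun_prop : Continuous _).continuousOn.log
      fun θ _ => (mul_cos_sq_add_mul_sin_sq_pos ha hb θ).ne')
    (fun θ _ => cos_sq_mul_log_add_sin_sq_mul_log_le ha hb θ)
    ⟨π / 4, ⟨by positivity, by linarith [pi_pos]⟩, ?_⟩
  have hcos : cos (π / 4) ^ 2 = 1 / 2 := by rw [cos_pi_div_four]; norm_num [div_pow]
  have hsin : sin (π / 4) ^ 2 = 1 / 2 := by rw [sin_pi_div_four]; norm_num [div_pow]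
  rw [hcos, hsin]
  convert log_add_log_div_two_lt ha hb hab using 2 <;> ring

/-- For `c > 0`, `c ≠ 1`, the angular entropy-production integral is strictly positive:
`∫₀^{π/2} log(c·cos²θ + c⁻¹·sin²θ) dθ > 0`. -/
theorem stmt_8 (c : ℝ) (hc : 0 < c) (hc1 : c ≠ 1) :
    0 < ∫ θ in (0:ℝ)..(Real.pi / 2),
      Real.log (c * Real.cos θ ^ 2 + c⁻¹ * Real.sin θ ^ 2) := by
  have hc_ne_inv : c ≠ c⁻¹ := by
    rw [Ne, self_eq_inv₀]
    rintro (h | h | h) <;> [linarith; linarith; exact hc1 h]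
  have := pi_div_four_mul_log_add_log_lt_integral_log hc (inv_pos.2 hc) hc_ne_inv
  rwa [log_inv, add_neg_cancel, mul_zero] at this
end
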